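/- The category of coherent topological spaces with quasi-compact continuous maps is equivalent to the opposite of the category of distributive lattices, via the functor sending a coherent space to its lattice of quasi-compact open subsets. -/

import Mathlib

open CategoryTheory TopologicalSpace

/-- A coherent (spectral) topological space: sober, quasi-compact, quasi-separated,
with a basis of quasi-compact open sets. -/
structure CoherentSpaceCat where
  carrier : Type
  [topInst : TopologicalSpace carrier]
  [sober : QuasiSober carrier]
  [t0 : T0Space carrier]
  [cpt : CompactSpace carrier]
  [qsep : QuasiSeparatedSpace carrier]
  basis : ∀ (x : carrier) (U : Set carrier), IsOpen U → x ∈ U →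
    ∃ V, IsOpen V ∧ IsCompact V ∧ x ∈ V ∧ V ⊆ U

attribute [instance] CoherentSpaceCat.topInst CoherentSpaceCat.sober
  CoherentSpaceCat.t0 CoherentSpaceCat.cpt CoherentSpaceCat.qsep

instance : CoeSort CoherentSpaceCat Type := ⟨CoherentSpaceCat.carrier⟩

/-- The category of coherent spaces and quasi-compact (spectral) continuous maps. -/
instance : Category CoherentSpaceCat where
  Hom X Y := {f : X.carrier → Y.carrier // IsSpectralMap f}
  id X := ⟨id, isSpectralMap_id⟩
  comp f g := ⟨g.1 ∘ f.1, g.2.comp f.2⟩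


/-!
A bounded distributive lattice `L` is recovered from its spectrum, the space of prime filters
`f` with basic open sets `{f | a ∈ f}`: by the prime ideal theorem these basic open sets are
compact, they are exactly the compact open sets, and `a ↦ {f | a ∈ f}` is an order isomorphism.
Conversely, a coherent space `X` maps to the spectrum of its lattice of compact open sets by
sending `x` to the filter of compact open sets containing it. This map is injective because `X`
is T0 with a basis of compact open sets, and it is surjective because `X` is sober: a prime filter
`f` cuts out the irreducible closed set of points lying in no compact open set outside `f`, whose
generic point is sent to `f`. Both constructions are functorial, by preimage and by composition.
-/

/-- The points of the spectrum of `L` are its prime filters, encoded as bounded lattice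
homomorphisms `L → Prop`. -/
def LatticeSpectrum (L : Type*) [DistribLattice L] [BoundedOrder L] : Type _ :=
  BoundedLatticeHom L Prop

namespace LatticeSpectrum

variable {L M : Type*} [DistribLattice L] [BoundedOrder L] [DistribLattice M] [BoundedOrder M]

noncomputable instance : FunLike (LatticeSpectrum L) L Prop := BoundedLatticeHom.instFunLike

instance : BoundedLatticeHomClass (LatticeSpectrum L) L Prop :=
  BoundedLatticeHom.instBoundedLatticeHomClass

@[ext] lemma ext {f g : LatticeSpectrum L} (h : ∀ a, f a ↔ g a) : f = g :=
  DFunLike.ext _ _ fun a => propext (h a)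

lemma apply_finset_sup {ι : Type*} (f : LatticeSpectrum L) (s : Finset ι) (c : ι → L) :
    f (s.sup c) ↔ ∃ i ∈ s, f (c i) := by
  rw [map_finset_sup, Finset.sup_eq_iSup]
  simp

def basicOpen (a : L) : Set (LatticeSpectrum L) := {f | f a}

@[simp] lemma mem_basicOpen {a : L} {f : LatticeSpectrum L} : f ∈ basicOpen a ↔ f a := Iff.rfl

@[simp] lemma basicOpen_inf (a b : L) : basicOpen (a ⊓ b) = basicOpen a ∩ basicOpen b := by
  ext f; simp [map_inf]

@[simp] lemma basicOpen_sup (a b : L) : basicOpen (a ⊔ b) = basicOpen a ∪ basicOpen b := by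
  ext f; simp [map_sup]

@[simp] lemma basicOpen_top : basicOpen (⊤ : L) = Set.univ := by
  ext f; simp [map_top]

@[simp] lemma basicOpen_bot : basicOpen (⊥ : L) = ∅ := by
  ext f; simp [map_bot]

instance : TopologicalSpace (LatticeSpectrum L) :=
  generateFrom (Set.range basicOpen)

lemma isOpen_basicOpen (a : L) : IsOpen (basicOpen a) :=
  isOpen_generateFrom_of_mem ⟨a, rfl⟩

lemma isTopologicalBasis_basicOpen :
    IsTopologicalBasis (Set.range (basicOpen : L → Set (LatticeSpectrum L))) := by
  refine ⟨?_, ?_, rfl⟩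
  · rintro _ ⟨a, rfl⟩ _ ⟨b, rfl⟩ f hf
    exact ⟨basicOpen (a ⊓ b), ⟨a ⊓ b, rfl⟩, by simpa using hf, by simp⟩
  · exact Set.eq_univ_of_univ_subset fun f _ => ⟨basicOpen ⊤, ⟨⊤, rfl⟩, by simp⟩

lemma continuous_of_isOpen_preimage_basicOpen {X : Type*} [TopologicalSpace X]
    {g : X → LatticeSpectrum L} (h : ∀ a, IsOpen (g ⁻¹' basicOpen a)) : Continuous g :=
  continuous_generateFrom_iff.2 (Set.forall_mem_range.2 h)

lemma specializes_iff {f g : LatticeSpectrum L} : f ⤳ g ↔ ∀ a, g a → f a := by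
  rw [specializes_iff_pure, isTopologicalBasis_basicOpen.nhds_hasBasis.ge_iff]
  simp

instance : T0Space (LatticeSpectrum L) :=
  ⟨fun _ _ h => ext fun a =>
    isTopologicalBasis_basicOpen.inseparable_iff.1 h (basicOpen a) ⟨a, rfl⟩⟩

def ofPrimeIdeal (J : Order.Ideal L) [J.IsPrime] : LatticeSpectrum L where
  toFun a := a ∉ J
  map_sup' a b := by simp only [sup_Prop_eq, Order.Ideal.sup_mem_iff, not_and_or]
  map_inf' a b := by
    simp only [inf_Prop_eq, eq_iff_iff, ← not_or, not_iff_not]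
    exact ⟨Order.Ideal.IsPrime.mem_or_mem ‹_›,
      fun h => h.elim (J.lower inf_le_left) (J.lower inf_le_right)⟩
  map_top' := by simp [Order.Ideal.IsProper.top_notMem]
  map_bot' := by simp [Order.Ideal.bot_mem]

lemma exists_of_disjoint_filter_ideal {F : Order.PFilter L} {I : Order.Ideal L}
    (h : Disjoint (F : Set L) I) :
    ∃ f : LatticeSpectrum L, (∀ a ∈ F, f a) ∧ ∀ a ∈ I, ¬ f a := by
  obtain ⟨J, hJ, hIJ, hFJ⟩ := DistribLattice.prime_ideal_of_disjoint_filter_ideal h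
  exact ⟨ofPrimeIdeal J, fun _ ha => Set.disjoint_left.1 hFJ ha, fun _ ha h => h (hIJ ha)⟩

def idealOfFinsetSup {ι : Type*} (c : ι → L) : Order.Ideal L where
  carrier := {x | ∃ s : Finset ι, x ≤ s.sup c}
  lower' _ _ hyx := fun ⟨s, hs⟩ => ⟨s, hyx.trans hs⟩
  nonempty' := ⟨⊥, ∅, bot_le⟩
  directed' := by
    classical
    rintro x ⟨s, hs⟩ y ⟨t, ht⟩
    refine ⟨x ⊔ y, ⟨s ∪ t, ?_⟩, le_sup_left, le_sup_right⟩
    rw [Finset.sup_union]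
    exact sup_le_sup hs ht

lemma exists_le_finset_sup_of_basicOpen_subset {ι : Type*} {a : L} {c : ι → L}
    (h : basicOpen a ⊆ ⋃ i, basicOpen (c i)) : ∃ s : Finset ι, a ≤ s.sup c := by
  by_contra! hac
  have hdisj : Disjoint (Order.PFilter.principal a : Set L) (idealOfFinsetSup c) :=
    Set.disjoint_left.2 fun x hax ⟨s, hxs⟩ =>
      hac s ((Order.PFilter.mem_principal.1 hax).trans hxs)
  obtain ⟨f, hfa, hfc⟩ := exists_of_disjoint_filter_ideal hdisj
  obtain ⟨i, hi⟩ := Set.mem_iUnion.1 (h (hfa a (Order.PFilter.mem_principal.2 le_rfl)))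
  exact hfc (c i) ⟨{i}, by simp⟩ hi

lemma basicOpen_subset_basicOpen_iff {a b : L} : basicOpen a ⊆ basicOpen b ↔ a ≤ b := by
  refine ⟨fun h => ?_, fun h f => OrderHomClass.mono f h⟩
  obtain ⟨s, hs⟩ := exists_le_finset_sup_of_basicOpen_subset (a := a) (c := fun _ : Unit => b)
    (by rwa [Set.iUnion_const])
  exact hs.trans (Finset.sup_le fun _ _ => le_rfl)

lemma isCompact_basicOpen (a : L) : IsCompact (basicOpen a) := by
  refine isCompact_generateFrom' rfl fun ι U hU => ?_
  choose c hc using fun i => (U i).2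
  obtain ⟨s, hs⟩ := exists_le_finset_sup_of_basicOpen_subset (c := c) (by simpa [hc] using hU)
  refine ⟨s, s.finite_toSet, fun f hf => ?_⟩
  obtain ⟨i, hi, hfi⟩ := (apply_finset_sup f s c).1 (OrderHomClass.mono f hs hf)
  exact Set.mem_biUnion hi (hc i ▸ hfi)

lemma isCompact_and_isOpen_iff {s : Set (LatticeSpectrum L)} :
    IsCompact s ∧ IsOpen s ↔ ∃ a, s = basicOpen a := by
  rw [isCompact_open_iff_eq_finite_iUnion_of_isTopologicalBasis _ isTopologicalBasis_basicOpen
    isCompact_basicOpen]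
  constructor
  · rintro ⟨t, ht, rfl⟩
    refine ⟨ht.toFinset.sup id, ?_⟩
    ext f
    rw [mem_basicOpen, apply_finset_sup]
    simp
  · rintro ⟨a, rfl⟩
    exact ⟨{a}, Set.finite_singleton a, by simp⟩

instance : CompactSpace (LatticeSpectrum L) :=
  ⟨basicOpen_top (L := L) ▸ isCompact_basicOpen ⊤⟩

instance : PrespectralSpace (LatticeSpectrum L) :=
  .of_isTopologicalBasis' isTopologicalBasis_basicOpen isCompact_basicOpen

instance : QuasiSeparatedSpace (LatticeSpectrum L) where
  inter_isCompact U V hUo hUc hVo hVc := by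
    obtain ⟨a, rfl⟩ := isCompact_and_isOpen_iff.1 ⟨hUc, hUo⟩
    obtain ⟨b, rfl⟩ := isCompact_and_isOpen_iff.1 ⟨hVc, hVo⟩
    simpa using isCompact_basicOpen (a ⊓ b)

/-- The candidate generic point of `S`. -/
def ofIsIrreducible {S : Set (LatticeSpectrum L)} (hS : IsIrreducible S) : LatticeSpectrum L where
  toFun a := (S ∩ basicOpen a).Nonempty
  map_sup' a b := by simp [Set.inter_union_distrib_left, Set.union_nonempty]
  map_inf' a b := by
    simp only [inf_Prop_eq, eq_iff_iff, basicOpen_inf]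
    exact ⟨fun h => ⟨h.mono (by gcongr; exact Set.inter_subset_left),
      h.mono (by gcongr; exact Set.inter_subset_right)⟩,
      fun h => hS.2 _ _ (isOpen_basicOpen a) (isOpen_basicOpen b) h.1 h.2⟩
  map_top' := by simpa using hS.1
  map_bot' := by simp

lemma isGenericPoint_ofIsIrreducible {S : Set (LatticeSpectrum L)} (hS : IsIrreducible S)
    (hSc : IsClosed S) : IsGenericPoint (ofIsIrreducible hS) S := by
  have hmem : ofIsIrreducible hS ∈ S := by
    by_contra h
    obtain ⟨_, ⟨a, rfl⟩, ⟨g, hgS, hga⟩, haS⟩ :=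
      isTopologicalBasis_basicOpen.exists_subset_of_mem_open h hSc.isOpen_compl
    exact haS hga hgS
  rw [isGenericPoint_iff_specializes]
  exact fun g => ⟨fun h => h.mem_closed hSc hmem,
    fun hg => specializes_iff.2 fun a ha => ⟨g, hg, ha⟩⟩

instance : QuasiSober (LatticeSpectrum L) :=
  ⟨fun hS hSc => ⟨_, isGenericPoint_ofIsIrreducible hS hSc⟩⟩

instance : SpectralSpace (LatticeSpectrum L) where

noncomputable def comap (φ : BoundedLatticeHom L M) (f : LatticeSpectrum M) : LatticeSpectrum L :=
  BoundedLatticeHom.comp f φ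

lemma isSpectralMap_comap (φ : BoundedLatticeHom L M) : IsSpectralMap (comap φ) where
  toContinuous := continuous_of_isOpen_preimage_basicOpen fun a => isOpen_basicOpen (φ a)
  isCompact_preimage_of_isOpen s hso hsc := by
    obtain ⟨a, rfl⟩ := isCompact_and_isOpen_iff.1 ⟨hsc, hso⟩
    exact isCompact_basicOpen (φ a)

noncomputable def basicOpenOrderIso : L ≃o CompactOpens (LatticeSpectrum L) :=
  OrderIso.ofSurjective
    (OrderEmbedding.ofMapLEIff
      (fun a => ⟨⟨basicOpen a, isCompact_basicOpen a⟩, isOpen_basicOpen a⟩)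
      fun _ _ => basicOpen_subset_basicOpen_iff)
    fun U =>
      let ⟨a, ha⟩ := isCompact_and_isOpen_iff.1 ⟨U.isCompact, U.isOpen⟩
      ⟨a, CompactOpens.ext ha.symm⟩

end LatticeSpectrum

namespace TopologicalSpace.CompactOpens

variable {X Y : Type*} [TopologicalSpace X] [TopologicalSpace Y]

instance [QuasiSeparatedSpace X] : DistribLattice (CompactOpens X) :=
  SetLike.coe_injective.distribLattice _ .rfl .rfl coe_sup coe_inf

variable [QuasiSeparatedSpace X] [CompactSpace X] [QuasiSeparatedSpace Y] [CompactSpace Y]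

def comap {f : X → Y} (hf : IsSpectralMap f) :
    BoundedLatticeHom (CompactOpens Y) (CompactOpens X) where
  toFun U := ⟨⟨f ⁻¹' U, hf.isCompact_preimage_of_isOpen U.isOpen U.isCompact⟩,
    U.isOpen.preimage hf.continuous⟩
  map_sup' _ _ := rfl
  map_inf' _ _ := rfl
  map_top' := rfl
  map_bot' := rfl

end TopologicalSpace.CompactOpens

section CompactOpensSpectrum

open LatticeSpectrum

variable {X : Type*} [TopologicalSpace X] [QuasiSeparatedSpace X] [CompactSpace X]

def toCompactOpensSpectrum (x : X) : LatticeSpectrum (CompactOpens X) where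
  toFun U := x ∈ U
  map_sup' _ _ := rfl
  map_inf' _ _ := rfl
  map_top' := eq_true trivial
  map_bot' := eq_false id

@[simp] lemma toCompactOpensSpectrum_apply (x : X) (U : CompactOpens X) :
    toCompactOpensSpectrum x U ↔ x ∈ U := Iff.rfl

lemma continuous_toCompactOpensSpectrum : Continuous (toCompactOpensSpectrum (X := X)) :=
  continuous_of_isOpen_preimage_basicOpen fun U => U.isOpen

lemma toCompactOpensSpectrum_injective [T0Space X] [PrespectralSpace X] :
    Function.Injective (toCompactOpensSpectrum (X := X)) := fun _ _ h =>
  PrespectralSpace.isTopologicalBasis.eq_iff.2 fun s ⟨hso, hsc⟩ =>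
    iff_of_eq (DFunLike.congr_fun h ⟨⟨s, hsc⟩, hso⟩)

/-- The closure of the point of `X` that corresponds to `f`, once that point is known to exist. -/
def LatticeSpectrum.locus (f : LatticeSpectrum (CompactOpens X)) : Set X :=
  ⋂ U ∈ {U : CompactOpens X | ¬ f U}, (U : Set X)ᶜ

lemma LatticeSpectrum.mem_locus {f : LatticeSpectrum (CompactOpens X)} {x : X} :
    x ∈ f.locus ↔ ∀ U : CompactOpens X, x ∈ U → f U := by
  simp [locus, not_imp_comm]

lemma LatticeSpectrum.isClosed_locus (f : LatticeSpectrum (CompactOpens X)) :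
    IsClosed f.locus :=
  isClosed_biInter fun U _ => U.isOpen.isClosed_compl

lemma LatticeSpectrum.inter_locus_nonempty {f : LatticeSpectrum (CompactOpens X)}
    {V : CompactOpens X} (hV : f V) : ((V : Set X) ∩ f.locus).Nonempty := by
  by_contra hVC
  have hcover : (V : Set X) ⊆ ⋃ U ∈ {U : CompactOpens X | ¬ f U}, (U : Set X) :=
    fun x hxV => by_contra fun hx => hVC ⟨x, hxV, by simpa [locus] using hx⟩
  obtain ⟨t, ht, htfin, hVt⟩ :=
    V.isCompact.elim_finite_subcover_image (fun U _ => U.isOpen) hcover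
  have hsup : f (htfin.toFinset.sup id) :=
    OrderHomClass.mono f (SetLike.coe_subset_coe.1 (by simpa using hVt)) hV
  obtain ⟨U, hU, hfU⟩ := (apply_finset_sup f _ id).1 hsup
  exact ht (htfin.mem_toFinset.1 hU) hfU

lemma LatticeSpectrum.isIrreducible_locus [PrespectralSpace X]
    (f : LatticeSpectrum (CompactOpens X)) : IsIrreducible f.locus := by
  refine ⟨by simpa using inter_locus_nonempty (f := f) (V := ⊤) (by simp), ?_⟩
  rintro u v hu hv ⟨x, hxC, hxu⟩ ⟨y, hyC, hyv⟩
  obtain ⟨U, ⟨hUo, hUc⟩, hxU, hUu⟩ :=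
    PrespectralSpace.isTopologicalBasis.exists_subset_of_mem_open hxu hu
  obtain ⟨V, ⟨hVo, hVc⟩, hyV, hVv⟩ :=
    PrespectralSpace.isTopologicalBasis.exists_subset_of_mem_open hyv hv
  have hUV : f (⟨⟨U, hUc⟩, hUo⟩ ⊓ ⟨⟨V, hVc⟩, hVo⟩) := by
    rw [map_inf]
    exact ⟨mem_locus.1 hxC _ hxU, mem_locus.1 hyC _ hyV⟩
  obtain ⟨z, ⟨hzU, hzV⟩, hzC⟩ := inter_locus_nonempty hUV
  exact ⟨z, hzC, hUu hzU, hVv hzV⟩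

lemma toCompactOpensSpectrum_surjective [QuasiSober X] [PrespectralSpace X] :
    Function.Surjective (toCompactOpensSpectrum (X := X)) := by
  intro f
  obtain ⟨x, hx⟩ := QuasiSober.sober f.isIrreducible_locus f.isClosed_locus
  refine ⟨x, LatticeSpectrum.ext fun U => ?_⟩
  rw [toCompactOpensSpectrum_apply, ← SetLike.mem_coe, hx.mem_open_set_iff U.isOpen,
    Set.inter_comm]
  exact ⟨fun ⟨y, hyU, hyC⟩ => mem_locus.1 hyC U hyU, inter_locus_nonempty⟩

lemma isOpenMap_toCompactOpensSpectrum [QuasiSober X] [PrespectralSpace X] :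
    IsOpenMap (toCompactOpensSpectrum (X := X)) :=
  PrespectralSpace.isTopologicalBasis.isOpenMap_iff.2 fun s ⟨hso, hsc⟩ => by
    rw [show s = toCompactOpensSpectrum ⁻¹' basicOpen ⟨⟨s, hsc⟩, hso⟩ from rfl,
      Set.image_preimage_eq _ toCompactOpensSpectrum_surjective]
    exact isOpen_basicOpen _

noncomputable def compactOpensSpectrumHomeomorph [T0Space X] [QuasiSober X] [PrespectralSpace X] :
    X ≃ₜ LatticeSpectrum (CompactOpens X) :=
  (Equiv.ofBijective _ ⟨toCompactOpensSpectrum_injective, toCompactOpensSpectrum_surjective⟩)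
    |>.toHomeomorphOfContinuousOpen continuous_toCompactOpensSpectrum
      isOpenMap_toCompactOpensSpectrum

end CompactOpensSpectrum

namespace TopologicalSpace.CompactOpens

variable {X : Type*} [TopologicalSpace X]

def orderIsoSubtypeOpens : CompactOpens X ≃o {U : Opens X // IsCompact (U : Set X)} where
  toFun U := ⟨U.toOpens, U.isCompact⟩
  invFun U := ⟨⟨U.1, U.2⟩, U.1.isOpen⟩
  left_inv _ := rfl
  right_inv _ := rfl
  map_rel_iff' := Iff.rfl

end TopologicalSpace.CompactOpens

namespace CoherentSpaceCat

instance (X : CoherentSpaceCat) : SpectralSpace X where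
  isTopologicalBasis := isTopologicalBasis_of_isOpen_of_nhds (fun _ h => h.1) fun x U hxU hU =>
    let ⟨V, hVo, hVc, hxV, hVU⟩ := X.basis x U hU hxU
    ⟨V, ⟨hVo, hVc⟩, hxV, hVU⟩

def of (X : Type) [TopologicalSpace X] [SpectralSpace X] : CoherentSpaceCat where
  carrier := X
  basis _ _ hU hxU :=
    let ⟨V, ⟨hVo, hVc⟩, hxV, hVU⟩ :=
      PrespectralSpace.isTopologicalBasis.exists_subset_of_mem_open hxU hU
    ⟨V, hVo, hVc, hxV, hVU⟩

def isoOfHomeomorph {X Y : CoherentSpaceCat} (e : X ≃ₜ Y) : X ≅ Y where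
  hom := ⟨e, e.isProperMap.isSpectralMap⟩
  inv := ⟨e.symm, e.symm.isProperMap.isSpectralMap⟩
  hom_inv_id := Subtype.ext (funext e.symm_apply_apply)
  inv_hom_id := Subtype.ext (funext e.apply_symm_apply)

def compactOpensFunctor : CoherentSpaceCat ⥤ BddDistLatᵒᵖ where
  obj X := .op (.of (CompactOpens X))
  map f := (BddDistLat.ofHom (CompactOpens.comap f.2)).op
  map_id _ := rfl
  map_comp _ _ := rfl

noncomputable def spectrumFunctor : BddDistLatᵒᵖ ⥤ CoherentSpaceCat where
  obj L := of (LatticeSpectrum L.unop)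
  map φ := ⟨LatticeSpectrum.comap φ.unop.hom, LatticeSpectrum.isSpectralMap_comap _⟩
  map_id _ := rfl
  map_comp _ _ := rfl

noncomputable def compactOpensEquivalence : CoherentSpaceCat ≌ BddDistLatᵒᵖ :=
  .mk compactOpensFunctor spectrumFunctor
    (NatIso.ofComponents (fun _ => isoOfHomeomorph compactOpensSpectrumHomeomorph) fun _ => rfl)
    (NatIso.ofComponents (fun _ => (BddDistLat.Iso.mk LatticeSpectrum.basicOpenOrderIso).op)
      fun _ => rfl)

end CoherentSpaceCat

/-- Stone duality for coherent spaces: the category of coherent spaces with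
quasi-compact continuous maps is equivalent to the opposite of the category of
(bounded) distributive lattices, via the functor sending a coherent space to its
lattice of quasi-compact open subsets. -/
theorem coherentSpaces_equiv_distLat_op :
    ∃ e : CoherentSpaceCat ≌ BddDistLatᵒᵖ,
      ∀ X : CoherentSpaceCat,
        Nonempty (((e.functor.obj X).unop : Type) ≃o
          {U : Opens X.carrier // IsCompact (U : Set X.carrier)}) :=
  ⟨CoherentSpaceCat.compactOpensEquivalence, fun _ => ⟨CompactOpens.orderIsoSubtypeOpens⟩⟩
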